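/- For any topology O on a set X, the condensational equivalence class [O]_∼ equals the convex hull of the homeomorphism class [O]_≅ in the inclusion lattice of topologies on X; that is, O' ∈ [O]_∼ if and only if there exist O₁, O₂ ∈ [O]_≅ with O₁ ⊆ O' ⊆ O₂. -/

import Mathlib

open Set Filter TopologicalSpace

variable {X : Type*}

/-- The family of open sets of a topology. -/
def opensOf (O : TopologicalSpace X) : Set (Set X) := {U | O.IsOpen U}

/-- The image family f[O] = { f[U] : U ∈ O } of a topology under a bijection. -/
def imgOpens (f : X ≃ X) (O : TopologicalSpace X) : Set (Set X) :=
  (Set.image f) '' opensOf O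

/-- A topology is reversible iff every continuous self-bijection is a homeomorphism. -/
def Reversible (O : TopologicalSpace X) : Prop :=
  ∀ f : X ≃ X, @Continuous X X O O f → @Continuous X X O O f.symm

/-- The homeomorphism class [O]_≅ of a topology within the topologies on X. -/
def homeoCls (O : TopologicalSpace X) : Set (TopologicalSpace X) :=
  {O' | ∃ f : X ≃ X, imgOpens f O = opensOf O'}

/-- O₁ ≼ O₂ : there is a condensation (continuous bijection) (X,O₂) → (X,O₁). -/
def Cond (O₁ O₂ : TopologicalSpace X) : Prop :=
  ∃ f : X ≃ X, @Continuous X X O₂ O₁ f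

/-- The condensational equivalence class [O]_∼. -/
def simCls (O : TopologicalSpace X) : Set (TopologicalSpace X) :=
  {O' | Cond O' O ∧ Cond O O'}

/-
Topologies are ordered by fineness (`t ≤ s` iff every `s`-open set is `t`-open), and for a
bijection `f` both `O.coinduced f` and `O.induced f.symm` are the transported topology `f[O]`.
A condensation `(X, O₂) → (X, O₁)` along `f` is the inequality `f[O₂] ≤ O₁`, or equivalently
`O₂ ≤ f⁻¹[O₁]`; so `O'` is condensationally equivalent to `O` exactly when it is squeezed
between two copies `f[O]` and `g[O]` of `O`.
-/

lemma opensOf_subset_opensOf_iff {s t : TopologicalSpace X} :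
    opensOf s ⊆ opensOf t ↔ t ≤ s :=
  TopologicalSpace.le_def.symm

lemma opensOf_coinduced (f : X ≃ X) (O : TopologicalSpace X) :
    opensOf (O.coinduced f) = imgOpens f O := by
  ext V
  simp only [opensOf, imgOpens, mem_ofPred_eq, mem_image]
  refine ⟨fun h => ⟨_, h, f.image_preimage V⟩, ?_⟩
  rintro ⟨U, hU, rfl⟩
  change O.IsOpen (f ⁻¹' (f '' U))
  rwa [f.preimage_image]

lemma mem_homeoCls_iff {O O' : TopologicalSpace X} :
    O' ∈ homeoCls O ↔ ∃ f : X ≃ X, O.coinduced f = O' := by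
  simp only [homeoCls, mem_ofPred_eq, ← opensOf_coinduced]
  refine exists_congr fun f => ⟨fun h => ?_, by rintro rfl; rfl⟩
  exact TopologicalSpace.ext (funext fun U => propext (Set.ext_iff.mp h U))

lemma exists_mem_homeoCls_iff {O : TopologicalSpace X} {P : TopologicalSpace X → Prop} :
    (∃ O₁ ∈ homeoCls O, P O₁) ↔ ∃ f : X ≃ X, P (O.coinduced f) := by
  simp only [mem_homeoCls_iff]
  exact ⟨fun ⟨_, ⟨f, hf⟩, h⟩ => ⟨f, hf ▸ h⟩, fun ⟨f, h⟩ => ⟨_, ⟨f, rfl⟩, h⟩⟩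

lemma cond_iff_exists_coinduced_le {O₁ O₂ : TopologicalSpace X} :
    Cond O₁ O₂ ↔ ∃ f : X ≃ X, O₂.coinduced f ≤ O₁ :=
  exists_congr fun _ => continuous_iff_coinduced_le

lemma cond_iff_exists_le_coinduced {O₁ O₂ : TopologicalSpace X} :
    Cond O₁ O₂ ↔ ∃ f : X ≃ X, O₂ ≤ O₁.coinduced f := by
  simp only [Cond, continuous_iff_le_induced, ← Equiv.coinduced_symm]
  exact ⟨fun ⟨f, h⟩ => ⟨f.symm, h⟩, fun ⟨f, h⟩ => ⟨f.symm, by simpa using h⟩⟩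

/-- [O]_∼ is the convex hull of [O]_≅. -/
theorem stmt_4 (O O' : TopologicalSpace X) :
    O' ∈ simCls O ↔
      ∃ O₁ ∈ homeoCls O, ∃ O₂ ∈ homeoCls O,
        opensOf O₁ ⊆ opensOf O' ∧ opensOf O' ⊆ opensOf O₂ := by
  simp only [simCls, mem_ofPred_eq, exists_mem_homeoCls_iff, opensOf_subset_opensOf_iff,
    exists_and_left]
  rw [cond_iff_exists_coinduced_le, cond_iff_exists_le_coinduced, and_comm, exists_and_right]
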